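/- A hyperbolic function F(x₁e₁ + x₂e₂) = F₁(x₁)e₁ + F₂(x₂)e₂ on [α, β]_𝕜 has hyperbolic bounded variation (i.e., the set of its variation sums over strong partitions is bounded above in the hyperbolic order) if and only if F₁ : [a₁, b₁] → ℝ and F₂ : [a₂, b₂] → ℝ are real functions of bounded variation. -/
import Mathlib


/-- The hyperbolic partial order on `𝕂 ≅ ℝ × ℝ`. -/
def hle (x y : ℝ × ℝ) : Prop := x.1 ≤ y.1 ∧ x.2 ≤ y.2

/-- `ρ 0, ρ 1, …, ρ n` is a strong partition of `[α, β]_𝕜`: a `⪯`-chain of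
pairwise distinct points starting at `α` and ending at `β`. -/
def IsStrongPartition (ρ : ℕ → ℝ × ℝ) (n : ℕ) (α β : ℝ × ℝ) : Prop :=
  ρ 0 = α ∧ ρ n = β ∧ (∀ j < n, hle (ρ j) (ρ (j + 1))) ∧
    ∀ i ≤ n, ∀ j ≤ n, i ≠ j → ρ i ≠ ρ j

/-- The set of hyperbolic variation sums `∑_j |F(ρ_{j+1}) - F(ρ_j)|_𝕜` of `F`
over all strong partitions of `[α, β]_𝕜`. -/
def hVarSums (F : ℝ × ℝ → ℝ × ℝ) (α β : ℝ × ℝ) : Set (ℝ × ℝ) :=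
  {v | ∃ (n : ℕ) (ρ : ℕ → ℝ × ℝ), IsStrongPartition ρ n α β ∧
    v = ∑ j ∈ Finset.range n,
      (|(F (ρ (j + 1))).1 - (F (ρ j)).1|, |(F (ρ (j + 1))).2 - (F (ρ j)).2|)}

/-- The set of variation sums `∑_j |g(p_{j+1}) - g(p_j)|` of a real function
`g` over all partitions `{p₀ < ⋯ < p_m}` of `[a, b]`. -/
def realVarSums (g : ℝ → ℝ) (a b : ℝ) : Set ℝ :=
  {v | ∃ (m : ℕ) (p : ℕ → ℝ), p 0 = a ∧ p m = b ∧ (∀ i < m, p i < p (i + 1)) ∧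
    v = ∑ i ∈ Finset.range m, |g (p (i + 1)) - g (p i)|}

lemma chain_lt {p : ℕ → ℝ} {m : ℕ} (h : ∀ i < m, p i < p (i + 1)) :
    ∀ i j, i < j → j ≤ m → p i < p j := by
  intro i j
  induction j with
  | zero => intro h1 _; omega
  | succ k ih =>
    intro h1 h2
    rcases Nat.lt_succ_iff_lt_or_eq.mp h1 with h' | h'
    · exact (ih h' (by omega)).trans (h k (by omega))
    · subst h'; exact h i (by omega)

lemma sum_abs_mem_realVarSums (g : ℝ → ℝ) :
    ∀ (n : ℕ) (x : ℕ → ℝ), (∀ j < n, x j ≤ x (j + 1)) →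
      (∑ j ∈ Finset.range n, |g (x (j + 1)) - g (x j)|) ∈ realVarSums g (x 0) (x n) := by
  intro n
  induction n with
  | zero =>
    intro x _
    exact ⟨0, fun _ => x 0, rfl, rfl, fun i hi => absurd hi (Nat.not_lt_zero i), by simp⟩
  | succ n ih =>
    intro x hx
    have h := ih x (fun j hj => hx j (by omega))
    rcases eq_or_lt_of_le (hx n (by omega)) with heq | hlt
    · simpa [Finset.sum_range_succ, ← heq] using h
    · obtain ⟨m, p, hp0, hpm, hps, hsum⟩ := h
      refine ⟨m + 1, fun k => if k ≤ m then p k else x (n + 1), by simp [hp0], by simp, ?_, ?_⟩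
      · intro i hi
        rcases lt_or_eq_of_le (Nat.lt_succ_iff.mp hi) with h' | h'
        · simpa [Nat.le_of_lt h', Nat.succ_le_of_lt h'] using hps i h'
        · subst h'
          simpa [hpm] using hlt
      · have e1 : ∀ i ∈ Finset.range m,
            |g (if i + 1 ≤ m then p (i + 1) else x (n + 1)) -
              g (if i ≤ m then p i else x (n + 1))| = |g (p (i + 1)) - g (p i)| := by
          intro i hi
          simp only [Finset.mem_range] at hi
          rw [if_pos (by omega), if_pos (by omega)]
        rw [Finset.sum_range_succ, Finset.sum_range_succ (f := fun i =>
          |g (if i + 1 ≤ m then p (i + 1) else x (n + 1)) - g (if i ≤ m then p i else x (n + 1))|),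
          Finset.sum_congr rfl e1, ← hsum]
        simp [hpm]

/-- `F(x₁e₁ + x₂e₂) = F₁(x₁)e₁ + F₂(x₂)e₂` has hyperbolic bounded variation
(the idempotent components of its hyperbolic variation sums over strong
partitions form bounded sets of reals) if and only if `F₁` and `F₂` are real
functions of bounded variation on `[a₁, b₁]` and `[a₂, b₂]`. -/
theorem hyperbolic_bounded_variation_iff (a₁ b₁ a₂ b₂ : ℝ) (ha : a₁ ≤ b₁)
    (hb : a₂ ≤ b₂) (F₁ F₂ : ℝ → ℝ) (F : ℝ × ℝ → ℝ × ℝ)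
    (hF : ∀ ξ : ℝ × ℝ, F ξ = (F₁ ξ.1, F₂ ξ.2)) :
    (BddAbove ((fun v : ℝ × ℝ => v.1) '' hVarSums F (a₁, a₂) (b₁, b₂)) ∧
      BddAbove ((fun v : ℝ × ℝ => v.2) '' hVarSums F (a₁, a₂) (b₁, b₂))) ↔
    (BddAbove (realVarSums F₁ a₁ b₁) ∧ BddAbove (realVarSums F₂ a₂ b₂)) := by
  constructor
  · rintro ⟨⟨M₁, hM₁⟩, ⟨M₂, hM₂⟩⟩
    constructor
    · refine ⟨M₁, ?_⟩
      rintro v ⟨m, p, hp0, hpm, hps, rfl⟩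
      by_cases h2 : a₂ = b₂
      · set ρ : ℕ → ℝ × ℝ := fun j => (p j, a₂) with hρ
        have hsp : IsStrongPartition ρ m (a₁, a₂) (b₁, b₂) := by
          refine ⟨by simp [hρ, hp0], by simp [hρ, hpm, h2], fun j hj => ⟨(hps j hj).le, le_rfl⟩, ?_⟩
          intro i hi j hj hij hc
          have hpe : p i = p j := congrArg Prod.fst hc
          rcases hij.lt_or_gt with h' | h'
          · exact absurd hpe (ne_of_lt (chain_lt hps i j h' hj))
          · exact absurd hpe.symm (ne_of_lt (chain_lt hps j i h' hi))
        have hv : (∑ j ∈ Finset.range m,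
            (|(F (ρ (j + 1))).1 - (F (ρ j)).1|, |(F (ρ (j + 1))).2 - (F (ρ j)).2|)) ∈
            hVarSums F (a₁, a₂) (b₁, b₂) := ⟨m, ρ, hsp, rfl⟩
        have hle1 := hM₁ (Set.mem_image_of_mem _ hv)
        rw [Prod.fst_sum] at hle1
        simpa [hρ, hF] using hle1
      · have h2' : a₂ < b₂ := lt_of_le_of_ne hb h2
        set ρ : ℕ → ℝ × ℝ := fun j => if j ≤ m then (p j, a₂) else (b₁, b₂) with hρ
        have hsp : IsStrongPartition ρ (m + 1) (a₁, a₂) (b₁, b₂) := by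
          refine ⟨by simp [hρ, hp0], by simp [hρ], ?_, ?_⟩
          · intro j hj
            rcases lt_or_eq_of_le (Nat.lt_succ_iff.mp hj) with h' | h'
            · simp only [hρ, if_pos (Nat.le_of_lt h'), if_pos (Nat.succ_le_of_lt h')]
              exact ⟨(hps j h').le, le_rfl⟩
            · subst h'
              simp only [hρ, if_pos le_rfl, if_neg (show ¬ (j + 1 ≤ j) by omega)]
              exact ⟨hpm ▸ le_rfl, hb⟩
          · intro i hi j hj hij hc
            by_cases him : i ≤ m <;> by_cases hjm : j ≤ m
            · simp only [hρ, if_pos him, if_pos hjm] at hc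
              have hpe : p i = p j := congrArg Prod.fst hc
              rcases hij.lt_or_gt with h' | h'
              · exact absurd hpe (ne_of_lt (chain_lt hps i j h' hjm))
              · exact absurd hpe.symm (ne_of_lt (chain_lt hps j i h' him))
            · simp only [hρ, if_pos him, if_neg hjm] at hc
              exact absurd (congrArg Prod.snd hc) (ne_of_lt h2')
            · simp only [hρ, if_neg him, if_pos hjm] at hc
              exact absurd (congrArg Prod.snd hc).symm (ne_of_lt h2')
            · omega
        have hv : (∑ j ∈ Finset.range (m + 1),
            (|(F (ρ (j + 1))).1 - (F (ρ j)).1|, |(F (ρ (j + 1))).2 - (F (ρ j)).2|)) ∈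
            hVarSums F (a₁, a₂) (b₁, b₂) := ⟨m + 1, ρ, hsp, rfl⟩
        have hle1 := hM₁ (Set.mem_image_of_mem _ hv)
        rw [Prod.fst_sum] at hle1
        refine le_trans (le_of_eq ?_) hle1
        rw [Finset.sum_range_succ]
        have elast : |(F (ρ (m + 1))).1 - (F (ρ m)).1| = 0 := by
          simp only [hρ, if_neg (show ¬ (m + 1 ≤ m) by omega), if_pos le_rfl, hF, hpm,
            sub_self, abs_zero]
        rw [elast, add_zero]
        refine Finset.sum_congr rfl ?_
        intro i hi
        simp only [Finset.mem_range] at hi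
        simp only [hρ, if_pos (show i ≤ m by omega), if_pos (show i + 1 ≤ m by omega), hF]
    · refine ⟨M₂, ?_⟩
      rintro v ⟨m, p, hp0, hpm, hps, rfl⟩
      by_cases h1 : a₁ = b₁
      · set ρ : ℕ → ℝ × ℝ := fun j => (a₁, p j) with hρ
        have hsp : IsStrongPartition ρ m (a₁, a₂) (b₁, b₂) := by
          refine ⟨by simp [hρ, hp0], by simp [hρ, hpm, h1], fun j hj => ⟨le_rfl, (hps j hj).le⟩, ?_⟩
          intro i hi j hj hij hc
          have hpe : p i = p j := congrArg Prod.snd hc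
          rcases hij.lt_or_gt with h' | h'
          · exact absurd hpe (ne_of_lt (chain_lt hps i j h' hj))
          · exact absurd hpe.symm (ne_of_lt (chain_lt hps j i h' hi))
        have hv : (∑ j ∈ Finset.range m,
            (|(F (ρ (j + 1))).1 - (F (ρ j)).1|, |(F (ρ (j + 1))).2 - (F (ρ j)).2|)) ∈
            hVarSums F (a₁, a₂) (b₁, b₂) := ⟨m, ρ, hsp, rfl⟩
        have hle2 := hM₂ (Set.mem_image_of_mem _ hv)
        rw [Prod.snd_sum] at hle2
        simpa [hρ, hF] using hle2
      · have h1' : a₁ < b₁ := lt_of_le_of_ne ha h1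
        set ρ : ℕ → ℝ × ℝ := fun j => if j ≤ m then (a₁, p j) else (b₁, b₂) with hρ
        have hsp : IsStrongPartition ρ (m + 1) (a₁, a₂) (b₁, b₂) := by
          refine ⟨by simp [hρ, hp0], by simp [hρ], ?_, ?_⟩
          · intro j hj
            rcases lt_or_eq_of_le (Nat.lt_succ_iff.mp hj) with h' | h'
            · simp only [hρ, if_pos (Nat.le_of_lt h'), if_pos (Nat.succ_le_of_lt h')]
              exact ⟨le_rfl, (hps j h').le⟩
            · subst h'
              simp only [hρ, if_pos le_rfl, if_neg (show ¬ (j + 1 ≤ j) by omega)]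
              exact ⟨ha, hpm ▸ le_rfl⟩
          · intro i hi j hj hij hc
            by_cases him : i ≤ m <;> by_cases hjm : j ≤ m
            · simp only [hρ, if_pos him, if_pos hjm] at hc
              have hpe : p i = p j := congrArg Prod.snd hc
              rcases hij.lt_or_gt with h' | h'
              · exact absurd hpe (ne_of_lt (chain_lt hps i j h' hjm))
              · exact absurd hpe.symm (ne_of_lt (chain_lt hps j i h' him))
            · simp only [hρ, if_pos him, if_neg hjm] at hc
              exact absurd (congrArg Prod.fst hc) (ne_of_lt h1')
            · simp only [hρ, if_neg him, if_pos hjm] at hc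
              exact absurd (congrArg Prod.fst hc).symm (ne_of_lt h1')
            · omega
        have hv : (∑ j ∈ Finset.range (m + 1),
            (|(F (ρ (j + 1))).1 - (F (ρ j)).1|, |(F (ρ (j + 1))).2 - (F (ρ j)).2|)) ∈
            hVarSums F (a₁, a₂) (b₁, b₂) := ⟨m + 1, ρ, hsp, rfl⟩
        have hle2 := hM₂ (Set.mem_image_of_mem _ hv)
        rw [Prod.snd_sum] at hle2
        refine le_trans (le_of_eq ?_) hle2
        rw [Finset.sum_range_succ]
        have elast : |(F (ρ (m + 1))).2 - (F (ρ m)).2| = 0 := by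
          simp only [hρ, if_neg (show ¬ (m + 1 ≤ m) by omega), if_pos le_rfl, hF, hpm,
            sub_self, abs_zero]
        rw [elast, add_zero]
        refine Finset.sum_congr rfl ?_
        intro i hi
        simp only [Finset.mem_range] at hi
        simp only [hρ, if_pos (show i ≤ m by omega), if_pos (show i + 1 ≤ m by omega), hF]
  · rintro ⟨⟨M₁, hM₁⟩, ⟨M₂, hM₂⟩⟩
    constructor
    · refine ⟨M₁, ?_⟩
      rintro x ⟨v, ⟨n, ρ, hsp, rfl⟩, rfl⟩
      obtain ⟨h0, hn, hc, -⟩ := hsp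
      have hkey := sum_abs_mem_realVarSums F₁ n (fun j => (ρ j).1) (fun j hj => (hc j hj).1)
      simp only [h0, hn] at hkey
      have hb1 := hM₁ hkey
      simpa [hF, Prod.fst_sum] using hb1
    · refine ⟨M₂, ?_⟩
      rintro x ⟨v, ⟨n, ρ, hsp, rfl⟩, rfl⟩
      obtain ⟨h0, hn, hc, -⟩ := hsp
      have hkey := sum_abs_mem_realVarSums F₂ n (fun j => (ρ j).2) (fun j hj => (hc j hj).2)
      simp only [h0, hn] at hkey
      have hb2 := hM₂ hkey
      simpa [hF, Prod.snd_sum] using hb2
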